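/- arXiv:2412.06183 — 5 statements merged into one kernel-verified Lean document; each statement's English description precedes it below -/
import Mathlib

section
/- Let p, q ≥ 2 with gcd(p, q) = 1, let Q = p^φ(q) (φ the Euler totient), let A_q = ℤ/qℤ, and define the morphism δ on A_q* by δ(a) = (a + f_q(0))(a + f_q(1))...(a + f_q(Q−1)), where f_q(n) = n mod q. Then δ is Q-uniform, prolongable on 0, and its fixed point satisfies δ^ω(0)[n] = n mod q for all n ∈ ℕ. -/
/-- for coprime `p, q ≥ 2` and `Q = p^φ(q)`, the morphism
`δ(a) = (a + f_q 0)(a + f_q 1)⋯(a + f_q (Q-1))` on `ℤ/qℤ` (where `f_q n = n mod q`) is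
`Q`-uniform, prolongable on `0`, and its fixed point satisfies `δ^ω(0)[n] = n mod q`. -/
theorem stmt7 (p q : ℕ) (hp : 2 ≤ p) (hq : 2 ≤ q) (hpq : Nat.gcd p q = 1)
    (Q : ℕ) (hQ : Q = p ^ Nat.totient q)
    (δ : ZMod q → List (ZMod q))
    (hδ : ∀ a, δ a = List.ofFn fun j : Fin Q => a + ((j : ℕ) : ZMod q)) :
    (∀ a, (δ a).length = Q) ∧
    (δ 0).head? = some 0 ∧
    (∀ w : ℕ → ZMod q, w 0 = 0 →
      (∀ N, (List.ofFn fun i : Fin N => w i).flatMap δ =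
        List.ofFn fun i : Fin (N * Q) => w i) →
      ∀ n, w n = (n : ZMod q)) := by
  have hQpos : 0 < Q := hQ ▸ pow_pos (by omega) _
  have hQ2 : 2 ≤ Q := by
    rw [hQ]
    have ht : 1 ≤ Nat.totient q := Nat.totient_pos.mpr (by omega)
    calc 2 = 2 ^ 1 := by norm_num
    _ ≤ p ^ Nat.totient q := Nat.pow_le_pow_left hp 1 |>.trans (Nat.pow_le_pow_right (by omega) ht)
  have hQ1 : (Q : ZMod q) = 1 := by
    have := Nat.ModEq.pow_totient (Nat.coprime_iff_gcd_eq_one.mpr hpq)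
    rw [hQ]
    have : ((p ^ Nat.totient q : ℕ) : ZMod q) = ((1 : ℕ) : ZMod q) :=
      (ZMod.natCast_eq_natCast_iff _ _ _).mpr this
    simpa using this
  refine ⟨fun a => by rw [hδ]; simp, ?_, ?_⟩
  · rw [hδ]
    obtain ⟨Q', rfl⟩ : ∃ Q', Q = Q' + 1 := ⟨Q - 1, by omega⟩
    rw [List.ofFn_succ]
    simp
  · intro w hw0 hcompat
    have key : ∀ N j, j < Q → w (N * Q + j) = w N + (j : ZMod q) := by
      intro N j hj
      have h1 := hcompat N
      have h2 := hcompat (N + 1)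
      have hsplit : (List.ofFn fun i : Fin (N + 1) => w i) =
          (List.ofFn fun i : Fin N => w i) ++ [w N] := by
        rw [List.ofFn_succ']
        simp [List.concat_eq_append]
      rw [hsplit, List.flatMap_append, h1] at h2
      rw [show (N + 1) * Q = N * Q + Q from by ring, List.ofFn_add] at h2
      have h3 : [w N].flatMap δ = List.ofFn fun i : Fin Q => w (N * Q + i) := by
        have := List.append_cancel_left (by simpa using h2 :
          (List.ofFn fun i : Fin (N * Q) => w i) ++ [w N].flatMap δ =
          (List.ofFn fun i : Fin (N * Q) => w i) ++
            List.ofFn fun i : Fin Q => w (N * Q + i))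
        exact this
      simp [hδ] at h3
      have := congrFun h3 ⟨j, hj⟩
      simpa using this.symm
    intro n
    induction n using Nat.strong_induction_on with
    | _ n ih =>
      rcases Nat.eq_zero_or_pos n with rfl | hn
      · simpa using hw0
      · have hdiv : n = (n / Q) * Q + n % Q := (Nat.div_add_mod' n Q).symm
        have hlt : n / Q < n := Nat.div_lt_self hn (by omega)
        have := key (n / Q) (n % Q) (Nat.mod_lt _ (by omega))
        rw [← hdiv] at this
        rw [this, ih _ hlt]
        conv_rhs => rw [hdiv]
        push_cast
        rw [hQ1]
        ring
end

section
/- Let p, q ≥ 2 with gcd(p,q) = 1, gcd(k,q) = 1, and Q = p^φ(q). Define D(n) = ∑_{i=0}^{n−1} ζ_p^{t_p(i)} ζ_q^{k·(i mod q)} and r = D(Q). Then D(Qn) = r·D(n) for all n ∈ ℕ. -/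
open Complex Finset

/-- Sum factorization for multiplicative-on-blocks functions. -/
lemma stmt11_aux (Q : ℕ) (f : ℕ → ℂ)
    (h : ∀ m j, j < Q → f (Q * m + j) = f m * f j) :
    ∀ n, ∑ i ∈ range (Q * n), f i = (∑ i ∈ range Q, f i) * ∑ i ∈ range n, f i := by
  intro n
  induction n with
  | zero => simp
  | succ n ih =>
    rw [Nat.mul_succ, Finset.sum_range_add, ih, Finset.sum_range_succ]
    have hblock : ∑ j ∈ range Q, f (Q * n + j) = (∑ j ∈ range Q, f j) * f n := by
      rw [Finset.sum_mul]
      exact Finset.sum_congr rfl fun j hj => by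
        rw [h n j (Finset.mem_range.1 hj)]; ring
    rw [hblock]; ring

/-- for coprime `p, q ≥ 2`, `gcd(k,q) = 1`, and `Q = p^φ(q)`, the Dekking curve
`D(n) = ∑_{i=0}^{n-1} ζ_p^{t_p(i)} ζ_q^{k·(i mod q)}` satisfies `D(Q·n) = r·D(n)` for all `n`,
where `r = D(Q)` is the scaling factor. -/
theorem stmt11 (p q : ℕ) (hp : 2 ≤ p) (hq : 2 ≤ q) (hpq : Nat.gcd p q = 1)
    (k : ℤ) (hk : Int.gcd k q = 1)
    (t : ℕ → ZMod p) (ht0 : t 0 = 0)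
    (htrec : ∀ m r : ℕ, r < p → t (p * m + r) = t m + (r : ZMod p))
    (D : ℕ → ℂ)
    (hD : ∀ n, D n = ∑ i ∈ range n,
      Complex.exp (2 * Real.pi * I / p) ^ (t i).val *
        Complex.exp (2 * Real.pi * I / q) ^ (k * ((i % q : ℕ) : ℤ)))
    (r : ℂ) (hr : r = D (p ^ Nat.totient q)) :
    ∀ n, D (p ^ Nat.totient q * n) = r * D n := by
  haveI : NeZero p := ⟨by omega⟩
  set Q := p ^ Nat.totient q with hQdef
  set ωp := Complex.exp (2 * Real.pi * I / p) with hωp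
  set ωq := Complex.exp (2 * Real.pi * I / q) with hωq
  have hp0 : (p : ℂ) ≠ 0 := Nat.cast_ne_zero.2 (by omega)
  have hq0 : (q : ℂ) ≠ 0 := Nat.cast_ne_zero.2 (by omega)
  have hωq0 : ωq ≠ 0 := by rw [hωq]; exact Complex.exp_ne_zero _
  -- ωp ^ p = 1
  have hωpp : ωp ^ p = 1 := by
    rw [hωp, ← Complex.exp_nat_mul,
      show (p : ℂ) * (2 * Real.pi * I / p) = 2 * Real.pi * I from by field_simp]
    exact Complex.exp_two_pi_mul_I
  have hperp : ∀ n : ℕ, ωp ^ n = ωp ^ (n % p) := by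
    intro n
    conv_lhs => rw [← Nat.div_add_mod n p]
    rw [pow_add, pow_mul, hωpp, one_pow, one_mul]
  -- ωq ^ q = 1
  have hωqq : ωq ^ (q : ℤ) = 1 := by
    rw [zpow_natCast, hωq, ← Complex.exp_nat_mul,
      show (q : ℂ) * (2 * Real.pi * I / q) = 2 * Real.pi * I from by field_simp]
    exact Complex.exp_two_pi_mul_I
  have hzper : ∀ a b : ℤ, a % (q : ℤ) = b % (q : ℤ) → ωq ^ a = ωq ^ b := by
    intro a b h
    obtain ⟨c, hc⟩ := Int.ModEq.dvd h
    have hb : b = a + q * c := by linarith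
    rw [hb, zpow_add₀ hωq0, zpow_mul, hωqq, one_zpow, mul_one]
  -- t additivity
  have htA : ∀ e m j : ℕ, j < p ^ e → t (p ^ e * m + j) = t m + t j := by
    intro e
    induction e with
    | zero =>
      intro m j hj
      have : j = 0 := by simpa using hj
      simp [this, ht0]
    | succ e ih =>
      intro m j hj
      have hrlt : j % p < p := Nat.mod_lt _ (by omega)
      have hjlt : j / p < p ^ e := by
        rw [pow_succ] at hj
        exact Nat.div_lt_of_lt_mul (by rwa [Nat.mul_comm] at hj)
      have hsplit : p ^ (e + 1) * m + j = p * (p ^ e * m + j / p) + j % p := by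
        have := Nat.div_add_mod j p
        rw [pow_succ]
        nlinarith [Nat.div_add_mod j p]
      rw [hsplit, htrec _ _ hrlt, ih _ _ hjlt]
      conv_rhs => rw [← Nat.div_add_mod j p, htrec _ _ hrlt]
      ring
  -- Euler: Q ≡ 1 mod q
  have hQ1 : (Q : ℤ) % (q : ℤ) = 1 % (q : ℤ) := by
    have h := Nat.ModEq.pow_totient (show Nat.Coprime p q from hpq)
    have h2 : Q % q = 1 % q := h
    exact_mod_cast congrArg (Nat.cast : ℕ → ℤ) h2
  have hbase : ∀ x : ℕ, ((x % q : ℕ) : ℤ) % (q : ℤ) = (x : ℤ) % (q : ℤ) := by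
    intro x
    push_cast
    exact Int.emod_emod_of_dvd _ dvd_rfl
  -- exponent congruence
  have hmod : ∀ m j : ℕ,
      (k * (((Q * m + j) % q : ℕ) : ℤ)) % (q : ℤ) =
      (k * ((m % q : ℕ) : ℤ) + k * ((j % q : ℕ) : ℤ)) % (q : ℤ) := by
    intro m j
    have h1 : ((Q * m + j : ℕ) : ℤ) ≡ (m : ℤ) + (j : ℤ) [ZMOD (q : ℤ)] := by
      push_cast
      calc (Q : ℤ) * m + j ≡ 1 * m + j [ZMOD (q : ℤ)] :=
            Int.ModEq.add_right _ (Int.ModEq.mul_right _ hQ1)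
        _ = (m : ℤ) + j := by ring
    have h2 : (k * (((Q * m + j) % q : ℕ) : ℤ)) ≡ k * ((m : ℤ) + j) [ZMOD (q : ℤ)] :=
      Int.ModEq.mul_left k ((hbase (Q * m + j)).trans h1)
    have h3 : (k * ((m % q : ℕ) : ℤ) + k * ((j % q : ℕ) : ℤ)) ≡ k * ((m : ℤ) + j) [ZMOD (q : ℤ)] := by
      have := (Int.ModEq.mul_left k (hbase m)).add (Int.ModEq.mul_left k (hbase j))
      calc (k * ((m % q : ℕ) : ℤ) + k * ((j % q : ℕ) : ℤ))
          ≡ k * (m : ℤ) + k * (j : ℤ) [ZMOD (q : ℤ)] := this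
        _ = k * ((m : ℤ) + j) := by ring
    exact h2.trans h3.symm
  -- term multiplicativity
  have hterm : ∀ m j : ℕ, j < Q →
      ωp ^ (t (Q * m + j)).val * ωq ^ (k * (((Q * m + j) % q : ℕ) : ℤ)) =
      (ωp ^ (t m).val * ωq ^ (k * ((m % q : ℕ) : ℤ))) *
        (ωp ^ (t j).val * ωq ^ (k * ((j % q : ℕ) : ℤ))) := by
    intro m j hj
    rw [htA _ m j hj, ZMod.val_add, ← hperp, pow_add,
      hzper _ _ (hmod m j), zpow_add₀ hωq0]
    ring
  intro n
  rw [hD, hD n, hr, hD Q]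
  exact stmt11_aux Q
    (fun i => ωp ^ (t i).val * ωq ^ (k * ((i % q : ℕ) : ℤ)))
    hterm n
end

section
/- Let D = D_{p,q,k} be a regular Dekking curve with scaling factor r (|r| > 1), gcd(p,q) = 1, and Q = p^φ(q). Then the sets S_n = r^{−n}·P(D[:Qⁿ]) form a Cauchy sequence in the Hausdorff metric on nonempty compact subsets of ℂ, and hence converge to a limit K; moreover K ≠ {0} since 1 ∈ S_n for all n. -/
open Complex Finset Filter Metric TopologicalSpace Topology Pointwise

/-!
The step `ζ_p^{t(i)} ζ_q^{k i}` is multiplicative across base-`Q` digits, because `t` adds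
base-`p` digits modulo `p` and `Q ≡ 1 [MOD q]`. Summing, `D (Q m) = r D m`, so `r • P(D[:N])` and
`P(D[:QN])` share the vertices `D (Q i)`, and every point of either curve is within distance `Q`
of one of them. Rescaling, `d_H(S n, S (n+1)) ≤ Q ‖r‖^{-(n+1)}`, so `(S n)` is Cauchy in the
complete space of nonempty compact sets. Its limit contains `1 = r⁻ⁿ D (Qⁿ)`, which lies on
every `S n`.
-/

theorem dist_le_of_dist_succ_le_one {X : Type*} [PseudoMetricSpace X] {D : ℕ → X}
    (hD : ∀ i, dist (D i) (D (i + 1)) ≤ 1) (m n : ℕ) : dist (D m) (D (m + n)) ≤ n := by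
  simpa using dist_le_Ico_sum_of_dist_le (f := D) (m.le_add_right n) (d := fun _ => 1)
    fun {k} _ _ => hD k

section NonemptyCompacts

variable {X : Type*} [MetricSpace X]

theorem TopologicalSpace.NonemptyCompacts.mem_of_tendsto {A : ℕ → NonemptyCompacts X}
    {K : NonemptyCompacts X} (hA : Tendsto A atTop (𝓝 K)) {x : X} (hx : ∀ n, x ∈ A n) :
    x ∈ K := by
  have hlim := ((lipschitz_infDist_set x).continuous.tendsto K).comp hA
  have hzero : infDist x (K : Set X) = 0 :=
    tendsto_nhds_unique hlim (by simp [Function.comp_def, infDist_zero_of_mem (hx _)])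
  exact (K.isCompact.isClosed.mem_iff_infDist_zero K.nonempty).2 hzero

theorem exists_tendsto_hausdorffDist_of_le_geometric [CompleteSpace X] {S : ℕ → Set X}
    (hne : ∀ n, (S n).Nonempty) (hcpt : ∀ n, IsCompact (S n)) {C c : ℝ} (hc : c < 1)
    (hS : ∀ n, hausdorffDist (S n) (S (n + 1)) ≤ C * c ^ n) :
    (∀ ε > (0 : ℝ), ∃ N, ∀ m ≥ N, ∀ n ≥ N, hausdorffDist (S m) (S n) < ε) ∧
    ∃ K : NonemptyCompacts X, Tendsto (fun n => hausdorffDist (S n) K) atTop (𝓝 0) ∧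
      ∀ x, (∀ n, x ∈ S n) → x ∈ (K : Set X) := by
  let A n : NonemptyCompacts X := ⟨⟨S n, hcpt n⟩, hne n⟩
  have hA : CauchySeq A := cauchySeq_of_le_geometric c C hc hS
  obtain ⟨K, hK⟩ := cauchySeq_tendsto_of_complete hA
  exact ⟨Metric.cauchySeq_iff.1 hA, K, tendsto_iff_dist_tendsto_zero.1 hK,
    fun _ hx => NonemptyCompacts.mem_of_tendsto (A := A) hK hx⟩

end NonemptyCompacts

section Polygon

variable {E : Type*} [NormedAddCommGroup E] [NormedSpace ℝ E]

def polygon (D : ℕ → E) (N : ℕ) : Set E :=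
  ⋃ i ∈ range N, segment ℝ (D i) (D (i + 1))

theorem isCompact_polygon (D : ℕ → E) (N : ℕ) : IsCompact (polygon D N) :=
  (range N).isCompact_biUnion fun _ _ => by
    rw [← convexHull_pair (𝕜 := ℝ)]; exact (Set.toFinite _).isCompact_convexHull ℝ

theorem mem_polygon_right (D : ℕ → E) {N : ℕ} (hN : 0 < N) : D N ∈ polygon D N := by
  obtain ⟨i, rfl⟩ := Nat.exists_eq_add_of_lt hN
  exact Set.mem_biUnion (mem_range.2 (by omega)) (right_mem_segment ℝ _ _)

theorem exists_dist_le_one_of_mem_polygon {D : ℕ → E} (hD : ∀ i, dist (D i) (D (i + 1)) ≤ 1)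
    {N : ℕ} {z : E} (hz : z ∈ polygon D N) : ∃ i < N, dist z (D i) ≤ 1 := by
  obtain ⟨i, hi, hzi⟩ := Set.mem_iUnion₂.1 hz
  refine ⟨i, mem_range.1 hi, ?_⟩
  rw [dist_comm]
  linarith [dist_add_dist_of_mem_segment hzi, dist_nonneg (x := z) (y := D (i + 1)), hD i]

theorem hausdorffDist_smul_polygon_le {D : ℕ → ℂ} (hD : ∀ i, dist (D i) (D (i + 1)) ≤ 1)
    {Q : ℕ} (hQ : 0 < Q) {r : ℂ} (hself : ∀ m, D (Q * m) = r * D m) (hrQ : ‖r‖ ≤ Q)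
    (c : ℂ) (N : ℕ) :
    hausdorffDist ((c * r) • polygon D N) (c • polygon D (Q * N)) ≤ ‖c‖ * Q := by
  apply hausdorffDist_le_of_mem_dist (by positivity)
  · rintro _ ⟨z, hz, rfl⟩
    obtain ⟨i, hi, hzi⟩ := exists_dist_le_one_of_mem_polygon hD hz
    refine ⟨c • D (Q * i), Set.smul_mem_smul_set
      (Set.mem_biUnion (mem_range.2 (Nat.mul_lt_mul_of_pos_left hi hQ))
        (left_mem_segment ℝ _ _)), ?_⟩
    have hvertex : c • D (Q * i) = (c * r) • D i := by
      rw [hself, smul_eq_mul, smul_eq_mul, mul_assoc]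
    show dist ((c * r) • z) (c • D (Q * i)) ≤ _
    rw [hvertex, dist_smul₀, norm_mul, mul_assoc]
    gcongr
    calc ‖r‖ * dist z (D i) ≤ Q * 1 := by gcongr
      _ = Q := mul_one _
  · rintro _ ⟨z, hz, rfl⟩
    obtain ⟨j, hj, hzj⟩ := exists_dist_le_one_of_mem_polygon hD hz
    have hjQ : Q * (j / Q) + j % Q = j := Nat.div_add_mod j Q
    refine ⟨(c * r) • D (j / Q), Set.smul_mem_smul_set
      (Set.mem_biUnion (mem_range.2 ((Nat.div_lt_iff_lt_mul hQ).2 (by rwa [mul_comm])))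
        (left_mem_segment ℝ _ _)), ?_⟩
    have hvertex : (c * r) • D (j / Q) = c • D (Q * (j / Q)) := by
      rw [hself, smul_eq_mul, smul_eq_mul, mul_assoc]
    show dist (c • z) ((c * r) • D (j / Q)) ≤ _
    rw [hvertex, dist_smul₀]
    gcongr
    have hdigit : dist (D j) (D (Q * (j / Q))) ≤ (j % Q : ℕ) := by
      rw [dist_comm, ← congrArg D hjQ]
      exact dist_le_of_dist_succ_le_one hD _ _
    have hmod : ((j % Q : ℕ) : ℝ) + 1 ≤ Q := by exact_mod_cast Nat.mod_lt j hQ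
    linarith [dist_triangle z (D j) (D (Q * (j / Q)))]

end Polygon

theorem sum_range_mul_eq_mul_of_mul_add {R : Type*} [CommSemiring R] {f : ℕ → R} {Q : ℕ}
    (hf : ∀ a s, s < Q → f (Q * a + s) = f a * f s) (m : ℕ) :
    ∑ i ∈ range (Q * m), f i = (∑ i ∈ range Q, f i) * ∑ i ∈ range m, f i := by
  induction m with
  | zero => simp
  | succ m ih =>
    rw [Nat.mul_succ, sum_range_add, ih, sum_range_succ,
      sum_congr rfl fun s hs => hf m s (mem_range.1 hs), ← mul_sum]
    ring

theorem pow_val_add_of_pow_eq_one {M : Type*} [Monoid M] {n : ℕ} [NeZero n] {ζ : M}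
    (hζ : ζ ^ n = 1) (x y : ZMod n) : ζ ^ (x + y).val = ζ ^ x.val * ζ ^ y.val := by
  rw [ZMod.val_add, ← pow_eq_pow_mod _ hζ, pow_add]

theorem pow_eq_self_of_modEq_one {M : Type*} [Monoid M] {n N : ℕ} {η : M} (hη : η ^ n = 1)
    (hN : N ≡ 1 [MOD n]) : η ^ N = η := by
  rw [pow_eq_pow_mod _ hη, hN, ← pow_eq_pow_mod _ hη, pow_one]

section DivisionMonoid

variable {G : Type*} [DivisionMonoid G] {n : ℕ} {ζ : G}

theorem zpow_pow_eq_one (hζ : ζ ^ n = 1) (k : ℤ) : (ζ ^ k) ^ n = 1 := by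
  rw [← zpow_natCast, zpow_comm, zpow_natCast, hζ, one_zpow]

theorem zpow_mul_natCast_mod (hζ : ζ ^ n = 1) (k : ℤ) (i : ℕ) :
    ζ ^ (k * ((i % n : ℕ) : ℤ)) = (ζ ^ k) ^ i := by
  rw [zpow_mul, zpow_natCast, ← pow_eq_pow_mod _ (zpow_pow_eq_one hζ k)]

end DivisionMonoid

namespace Dekking

noncomputable def step (p q : ℕ) (k : ℤ) (t : ℕ → ZMod p) (i : ℕ) : ℂ :=
  Complex.exp (2 * Real.pi * I / p) ^ (t i).val *
    Complex.exp (2 * Real.pi * I / q) ^ (k * ((i % q : ℕ) : ℤ))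

variable {p q : ℕ} {t : ℕ → ZMod p}

theorem digitSum_pow_mul_add (ht0 : t 0 = 0)
    (htrec : ∀ m r : ℕ, r < p → t (p * m + r) = t m + (r : ZMod p)) (e a s : ℕ)
    (hs : s < p ^ e) : t (p ^ e * a + s) = t a + t s := by
  induction e generalizing s with
  | zero => simp [Nat.lt_one_iff.1 hs, ht0]
  | succ e ih =>
    have hp : 0 < p := Nat.pos_of_ne_zero (by rintro rfl; simp at hs)
    have hs' : s / p < p ^ e := (Nat.div_lt_iff_lt_mul hp).2 (by rwa [← pow_succ])
    have hsplit : p ^ (e + 1) * a + s = p * (p ^ e * a + s / p) + s % p := by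
      conv_lhs => rw [← Nat.div_add_mod s p]
      ring
    rw [hsplit, htrec _ _ (Nat.mod_lt s hp), ih _ hs', ← Nat.div_add_mod s p,
      htrec _ _ (Nat.mod_lt s hp), Nat.div_add_mod, add_assoc]

theorem norm_step (hp : p ≠ 0) (hq : q ≠ 0) (k : ℤ) (i : ℕ) : ‖step p q k t i‖ = 1 := by
  rw [step, norm_mul, norm_pow, norm_zpow,
    norm_eq_one_of_pow_eq_one (isPrimitiveRoot_exp p hp).pow_eq_one hp,
    norm_eq_one_of_pow_eq_one (isPrimitiveRoot_exp q hq).pow_eq_one hq, one_pow, one_zpow, one_mul]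

theorem step_zero (ht0 : t 0 = 0) (k : ℤ) : step p q k t 0 = 1 := by
  simp [step, ht0]

theorem step_mul_add (hp : p ≠ 0) (hq : q ≠ 0) (hpq : Nat.Coprime p q) (ht0 : t 0 = 0)
    (htrec : ∀ m r : ℕ, r < p → t (p * m + r) = t m + (r : ZMod p)) (k : ℤ) (a s : ℕ)
    (hs : s < p ^ Nat.totient q) :
    step p q k t (p ^ Nat.totient q * a + s) = step p q k t a * step p q k t s := by
  have : NeZero p := ⟨hp⟩
  have hζp := (isPrimitiveRoot_exp p hp).pow_eq_one
  have hζq := (isPrimitiveRoot_exp q hq).pow_eq_one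
  simp only [step, zpow_mul_natCast_mod hζq]
  rw [digitSum_pow_mul_add ht0 htrec _ _ _ hs, pow_val_add_of_pow_eq_one hζp, pow_add, pow_mul,
    pow_eq_self_of_modEq_one (zpow_pow_eq_one hζq k) (Nat.ModEq.pow_totient hpq)]
  ring

end Dekking

theorem stmt13_general (p q : ℕ) (hp : 2 ≤ p) (hq : 2 ≤ q) (hpq : Nat.gcd p q = 1)
    (k : ℤ)
    (t : ℕ → ZMod p) (ht0 : t 0 = 0)
    (htrec : ∀ m r : ℕ, r < p → t (p * m + r) = t m + (r : ZMod p))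
    (D : ℕ → ℂ)
    (hD : ∀ n, D n = ∑ i ∈ range n,
      Complex.exp (2 * Real.pi * I / p) ^ (t i).val *
        Complex.exp (2 * Real.pi * I / q) ^ (k * ((i % q : ℕ) : ℤ)))
    (r : ℂ) (hr : r = D (p ^ Nat.totient q))
    (hreg : 1 < ‖r‖)
    (S : ℕ → Set ℂ)
    (hS : ∀ n, S n = (fun z => r⁻¹ ^ n * z) ''
      ⋃ i ∈ range ((p ^ Nat.totient q) ^ n), segment ℝ (D i) (D (i + 1))) :
    (∀ n, (1 : ℂ) ∈ S n) ∧
    (∀ ε > (0 : ℝ), ∃ N, ∀ m ≥ N, ∀ n ≥ N,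
      Metric.hausdorffDist (S m) (S n) < ε) ∧
    ∃ K : Set ℂ, K.Nonempty ∧ IsCompact K ∧ K ≠ {0} ∧
      Tendsto (fun n => Metric.hausdorffDist (S n) K) atTop (nhds 0) := by
  set Q := p ^ Nat.totient q
  have hp0 : p ≠ 0 := by omega
  have hq0 : q ≠ 0 := by omega
  have hQ : 0 < Q := Nat.pos_of_ne_zero (pow_ne_zero _ hp0)
  have hD' : ∀ n, D n = ∑ i ∈ range n, Dekking.step p q k t i := hD
  have hunit : ∀ i, dist (D i) (D (i + 1)) ≤ 1 := fun i => by
    rw [dist_comm, dist_eq_norm, hD', hD', sum_range_succ, add_sub_cancel_left,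
      Dekking.norm_step hp0 hq0]
  have hself : ∀ m, D (Q * m) = r * D m := fun m => by
    rw [hr, hD', hD', hD',
      sum_range_mul_eq_mul_of_mul_add (Dekking.step_mul_add hp0 hq0 hpq ht0 htrec k)]
  have hrQ : ‖r‖ ≤ Q := by simpa [hD', hr] using dist_le_of_dist_succ_le_one hunit 0 Q
  have hr0 : r ≠ 0 := norm_pos_iff.1 (by linarith)
  have hpow : ∀ n, D (Q ^ n) = r ^ n := fun n => by
    induction n with
    | zero => simp [hD', Dekking.step_zero ht0]
    | succ n ih => rw [pow_succ', hself, ih, pow_succ']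
  have hS' : ∀ n, S n = r⁻¹ ^ n • polygon D (Q ^ n) := fun n => by
    rw [hS, ← Set.image_smul]; rfl
  have h1 : ∀ n, (1 : ℂ) ∈ S n := fun n => by
    rw [hS']
    refine ⟨D (Q ^ n), mem_polygon_right D (pow_pos hQ n), ?_⟩
    show r⁻¹ ^ n * D (Q ^ n) = 1
    rw [hpow, ← mul_pow, inv_mul_cancel₀ hr0, one_pow]
  have hgeom : ∀ n, hausdorffDist (S n) (S (n + 1)) ≤ (Q * ‖r‖⁻¹) * ‖r‖⁻¹ ^ n := fun n => by
    have h := hausdorffDist_smul_polygon_le hunit hQ hself hrQ (r⁻¹ ^ (n + 1)) (Q ^ n)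
    rw [pow_succ, mul_assoc, inv_mul_cancel₀ hr0, mul_one, ← pow_succ', ← pow_succ, ← hS',
      ← hS', norm_pow, norm_inv] at h
    exact h.trans_eq (by ring)
  obtain ⟨hcauchy, K, hK, hmem⟩ := exists_tendsto_hausdorffDist_of_le_geometric
    (fun n => ⟨1, h1 n⟩) (fun n => hS' n ▸ (isCompact_polygon D _).smul _)
    (inv_lt_one_of_one_lt₀ hreg) hgeom
  refine ⟨h1, hcauchy, K, K.nonempty, K.isCompact, fun hK0 => ?_, hK⟩
  exact one_ne_zero (hK0 ▸ hmem 1 h1)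

/-- let `D = D_{p,q,k}` be a regular Dekking curve (`gcd(p,q)=1`,
`gcd(k,q)=1`, scaling factor `r = D(Q)` with `|r| > 1`, `Q = p^φ(q)`). Then the scaled
polygonal curves `Sₙ = r^{-n}·P(D[:Qⁿ])` form a Cauchy sequence in the Hausdorff metric,
hence converge to some limit `K`, which is nonempty, compact, and ≠ `{0}`; indeed
`1 ∈ Sₙ` for every `n`. -/
theorem stmt13 (p q : ℕ) (hp : 2 ≤ p) (hq : 2 ≤ q) (hpq : Nat.gcd p q = 1)
    (k : ℤ) (hk : Int.gcd k q = 1)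
    (t : ℕ → ZMod p) (ht0 : t 0 = 0)
    (htrec : ∀ m r : ℕ, r < p → t (p * m + r) = t m + (r : ZMod p))
    (D : ℕ → ℂ)
    (hD : ∀ n, D n = ∑ i ∈ range n,
      Complex.exp (2 * Real.pi * I / p) ^ (t i).val *
        Complex.exp (2 * Real.pi * I / q) ^ (k * ((i % q : ℕ) : ℤ)))
    (r : ℂ) (hr : r = D (p ^ Nat.totient q))
    (hreg : 1 < ‖r‖)
    (S : ℕ → Set ℂ)
    (hS : ∀ n, S n = (fun z => r⁻¹ ^ n * z) ''
      ⋃ i ∈ range ((p ^ Nat.totient q) ^ n), segment ℝ (D i) (D (i + 1))) :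
    (∀ n, (1 : ℂ) ∈ S n) ∧
    (∀ ε > (0 : ℝ), ∃ N, ∀ m ≥ N, ∀ n ≥ N,
      Metric.hausdorffDist (S m) (S n) < ε) ∧
    ∃ K : Set ℂ, K.Nonempty ∧ IsCompact K ∧ K ≠ {0} ∧
      Tendsto (fun n => Metric.hausdorffDist (S n) K) atTop (nhds 0) :=
  stmt13_general p q hp hq hpq k t ht0 htrec D hD r hr hreg S hS
end

section
/- Let T = (t_p, τ) be a Thue-Morse turtle curve such that α_T(φ(0)) = ζ_q^k, where φ is the p-uniform Thue-Morse morphism, q ≥ 2, and gcd(k,q) = 1. Define the absolute turtle curve B(n) = ∑_{i=0}^{n−1} P_T(φ(t_p(i)))·ζ_q^{k·(i mod q)}. Then T(pn) = B(n) for all n ∈ ℕ; in particular T ∼ B. -/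
open Complex Finset

/-- The turtle group operation on `G = ℂ × S¹`. -/
noncomputable def gmul (g h : ℂ × Circle) : ℂ × Circle :=
  (g.1 + (g.2 : ℂ) * h.1, g.2 * h.2)

/-- `S` sums a word of turtle-group elements. -/
noncomputable def S (l : List (ℂ × Circle)) : ℂ × Circle :=
  l.foldl gmul ((0 : ℂ), (1 : Circle))

/-- Similarity of turtle curves. -/
def Sim (T₁ T₂ : ℕ → ℂ) : Prop :=
  ∃ k₁ k₂ : ℕ, 0 < k₁ ∧ 0 < k₂ ∧ ∃ c : ℂ, c ≠ 0 ∧ ∀ n, c * T₁ (k₁ * n) = T₂ (k₂ * n)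

lemma gmul_assoc (a b c : ℂ × Circle) : gmul (gmul a b) c = gmul a (gmul b c) := by
  simp only [gmul, Prod.mk.injEq, Circle.coe_mul]
  constructor
  · ring
  · exact mul_assoc _ _ _

lemma gmul_id (a : ℂ × Circle) : gmul ((0 : ℂ), (1 : Circle)) a = a := by
  simp [gmul]

lemma foldl_gmul (g : ℂ × Circle) (l : List (ℂ × Circle)) :
    l.foldl gmul g = gmul g (S l) := by
  induction l generalizing g with
  | nil => simp [S, gmul]
  | cons a l ih =>
    simp only [S, List.foldl_cons, gmul_id] at *
    rw [ih, ih a, gmul_assoc]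

lemma S_append (l₁ l₂ : List (ℂ × Circle)) : S (l₁ ++ l₂) = gmul (S l₁) (S l₂) := by
  rw [S, List.foldl_append, ← S, foldl_gmul]

lemma S_cons (a : ℂ × Circle) (l : List (ℂ × Circle)) : S (a :: l) = gmul a (S l) := by
  rw [S, List.foldl_cons, foldl_gmul, gmul_id]

lemma S_snd (l : List (ℂ × Circle)) : (S l).2 = (l.map Prod.snd).prod := by
  induction l with
  | nil => simp [S]
  | cons a l ih => simp [S_cons, gmul, ih]

lemma ofFn_nat_eq {α : Type*} (f : ℕ → α) {m n : ℕ} (h : m = n) :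
    (List.ofFn fun i : Fin m => f i) = List.ofFn fun i : Fin n => f i := by
  subst h; rfl

/-- let `T = (t_p, τ)` be a Thue–Morse turtle curve with
`α_T(φ(0)) = ζ_q^k` (`φ` the `p`-uniform Thue–Morse morphism, `q ≥ 2`, `gcd(k,q) = 1`),
and let `B(n) = ∑_{i<n} P_T(φ(t_p(i)))·ζ_q^{k·(i mod q)}` be the associated absolute
turtle curve. Then `T(p·n) = B(n)` for all `n`; in particular `T ∼ B`. -/
theorem stmt15 (p q k : ℕ) (hp : 2 ≤ p) (hq : 2 ≤ q) (hk : Nat.gcd k q = 1)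
    (t : ℕ → ZMod p) (ht0 : t 0 = 0)
    (htrec : ∀ m r : ℕ, r < p → t (p * m + r) = t m + (r : ZMod p))
    (φ : ZMod p → List (ZMod p))
    (hφ : ∀ a, φ a = List.ofFn fun j : Fin p => a + ((j : ℕ) : ZMod p))
    (τ : ZMod p → ℂ × Circle)
    (hα : ((S ((φ 0).map τ)).2 : ℂ) = Complex.exp (2 * Real.pi * I / q) ^ k)
    (T : ℕ → ℂ)
    (hT : ∀ n, T n = (S ((List.ofFn fun i : Fin n => t i).map τ)).1)
    (B : ℕ → ℂ)
    (hB : ∀ n, B n = ∑ i ∈ range n,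
      (S ((φ (t i)).map τ)).1 * Complex.exp (2 * Real.pi * I / q) ^ (k * (i % q))) :
    (∀ n, T (p * n) = B n) ∧ Sim T B := by
  have hp0 : 0 < p := by omega
  set ζ : ℂ := Complex.exp (2 * Real.pi * I / q) with hζ
  -- ζ^q = 1
  have hζq : ζ ^ q = 1 := by
    rw [hζ, ← Complex.exp_nat_mul]
    have hq0 : (q : ℂ) ≠ 0 := Nat.cast_ne_zero.mpr (by omega)
    rw [show (q : ℂ) * (2 * Real.pi * I / q) = 2 * Real.pi * I by field_simp]
    exact Complex.exp_two_pi_mul_I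
  have hζmod : ∀ i : ℕ, ζ ^ (k * (i % q)) = ζ ^ (k * i) := by
    intro i
    have h1 : k * i = q * (k * (i / q)) + k * (i % q) := by
      conv_lhs => rw [← Nat.div_add_mod i q]
      ring
    conv_rhs => rw [h1, pow_add, pow_mul, hζq, one_pow, one_mul]
  -- heading of φ a equals heading of φ 0
  have hhead : ∀ a : ZMod p, (S ((φ a).map τ)).2 = (S ((φ 0).map τ)).2 := by
    intro a
    haveI : NeZero p := ⟨by omega⟩
    have hbij : Function.Bijective (fun j : Fin p => ((j : ℕ) : ZMod p)) := by
      refine (Fintype.bijective_iff_injective_and_card _).mpr ⟨?_, by simp [ZMod.card]⟩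
      intro j j' h
      have h2 := congrArg ZMod.val h
      rw [ZMod.val_natCast_of_lt j.isLt, ZMod.val_natCast_of_lt j'.isLt] at h2
      exact Fin.ext h2
    have key : ∀ b : ZMod p,
        ((S ((φ b).map τ)).2 : Circle) = ∏ x : ZMod p, (τ x).2 := by
      intro b
      rw [S_snd, hφ, List.map_ofFn, List.map_ofFn, List.prod_ofFn]
      have h1 : ∏ j : Fin p, (τ (b + ((j : ℕ) : ZMod p))).2
          = ∏ x : ZMod p, (τ (b + x)).2 :=
        Fintype.prod_bijective _ hbij _ _ (fun _ => rfl)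
      calc ∏ j : Fin p, (Prod.snd ∘ τ ∘ fun j : Fin p => b + ((j : ℕ) : ZMod p)) j
          = ∏ x : ZMod p, (τ (b + x)).2 := h1
        _ = ∏ x : ZMod p, (τ x).2 := Equiv.prod_comp (Equiv.addLeft b) (fun x => (τ x).2)
    rw [key a, key 0]
  -- main induction
  have main : ∀ n : ℕ,
      (S ((List.ofFn fun i : Fin (p * n) => t i).map τ)).1
        = ∑ i ∈ range n, (S ((φ (t i)).map τ)).1 * ζ ^ (k * i) ∧
      (((S ((List.ofFn fun i : Fin (p * n) => t i).map τ)).2 : Circle) : ℂ) = ζ ^ (k * n) := by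
    intro n
    induction n with
    | zero => simp [S]
    | succ n ih =>
      have hsplit : (List.ofFn fun i : Fin (p * (n + 1)) => t i)
          = (List.ofFn fun i : Fin (p * n) => t i) ++ φ (t n) := by
        rw [ofFn_nat_eq t (show p * (n + 1) = p * n + p by ring), List.ofFn_add]
        congr 1
        rw [hφ]
        refine congrArg List.ofFn (funext fun j => ?_)
        simp only [Fin.coe_natAdd]
        exact htrec n j j.isLt
      rw [hsplit, List.map_append, S_append]
      obtain ⟨ih1, ih2⟩ := ih
      constructor
      · rw [show (gmul (S ((List.ofFn fun i : Fin (p * n) => t i).map τ))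
            (S ((φ (t n)).map τ))).1
            = (S ((List.ofFn fun i : Fin (p * n) => t i).map τ)).1
              + ((S ((List.ofFn fun i : Fin (p * n) => t i).map τ)).2 : ℂ)
                * (S ((φ (t n)).map τ)).1 from rfl,
          ih1, ih2, Finset.sum_range_succ]
        ring
      · rw [show (gmul (S ((List.ofFn fun i : Fin (p * n) => t i).map τ))
            (S ((φ (t n)).map τ))).2
            = (S ((List.ofFn fun i : Fin (p * n) => t i).map τ)).2
              * (S ((φ (t n)).map τ)).2 from rfl,
          Circle.coe_mul, ih2, hhead (t n), hα, ← pow_add]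
        congr 1 <;> ring
  have hTB : ∀ n, T (p * n) = B n := by
    intro n
    rw [hT, hB, (main n).1]
    exact Finset.sum_congr rfl fun i _ => by rw [hζmod i]
  exact ⟨hTB, p, 1, hp0, one_pos, 1, one_ne_zero, fun n => by
    rw [one_mul, one_mul, hTB n]⟩
end

section
/- Let p ≥ 2, let q ≥ 2 with gcd(p,q) = 1, and let k₁, k₂, b, d ∈ ℕ with gcd(k₂, qp^b) = 1 and k₁ ≡ p^d·k₂ (mod q). Define R(n) = ∑_{i=0}^{n−1} ζ_p^{t_p(i)} ζ_q^{k₁i} and D(n) = ∑_{i=0}^{n−1} ζ_p^{t_p(i)} ζ_{qp^b}^{k₂i}. Then D(p^{d+b})·R(n) = D(p^{d+b}·n) for all n ∈ ℕ; in particular R ∼ D. -/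
open Complex Finset

lemma sum_decomp (f : ℕ → ℂ) (a N : ℕ) :
    ∑ i ∈ range (a * N), f i = ∑ m ∈ range N, ∑ r ∈ range a, f (a * m + r) := by
  induction N with
  | zero => simp
  | succ N ih =>
    rw [Nat.mul_succ, Finset.sum_range_add, ih, Finset.sum_range_succ]

lemma pow_congr_mod {z : ℂ} {m : ℕ} (hz : z ^ m = 1) {a b : ℕ}
    (h : a ≡ b [MOD m]) : z ^ a = z ^ b := by
  have key : ∀ c : ℕ, z ^ c = z ^ (c % m) := by
    intro c
    conv_lhs => rw [← Nat.div_add_mod c m]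
    rw [pow_add, pow_mul, hz, one_pow, one_mul]
  have h' : a % m = b % m := h
  rw [key a, key b, h']

lemma t_carry {p : ℕ} (hp : 2 ≤ p) (t : ℕ → ZMod p) (ht0 : t 0 = 0)
    (htrec : ∀ m r : ℕ, r < p → t (p * m + r) = t m + (r : ZMod p)) :
    ∀ j m r, r < p ^ j → t (p ^ j * m + r) = t m + t r := by
  intro j
  induction j with
  | zero =>
    intro m r hr
    have : r = 0 := by simpa using hr
    subst this
    simp [ht0]
  | succ j ih =>
    intro m r hr
    have hp0 : 0 < p := by omega
    have hr1 : r / p < p ^ j := by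
      rw [Nat.div_lt_iff_lt_mul hp0]
      calc r < p ^ (j + 1) := hr
        _ = p ^ j * p := pow_succ p j
    have hmod : r % p < p := Nat.mod_lt _ hp0
    have hdecomp : p ^ (j + 1) * m + r = p * (p ^ j * m + r / p) + r % p := by
      rw [Nat.mul_add, Nat.add_assoc, Nat.div_add_mod, ← Nat.mul_assoc, ← pow_succ']
    have e1 : t (p ^ (j + 1) * m + r) = t m + t (r / p) + ((r % p : ℕ) : ZMod p) := by
      rw [hdecomp, htrec _ _ hmod, ih m (r / p) hr1]
    have e2 : t r = t (r / p) + ((r % p : ℕ) : ZMod p) := by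
      conv_lhs => rw [← Nat.div_add_mod r p]
      exact htrec _ _ hmod
    rw [e1, e2, add_assoc]


/-- let `p ≥ 2`, `q ≥ 2` with `gcd(p,q)=1`, and `k₁, k₂, b, d ∈ ℕ` with
`gcd(k₂, q·p^b) = 1` and `k₁ ≡ p^d·k₂ (mod q)`. For the Dekking curves
`R(n) = ∑_{i<n} ζ_p^{t_p(i)} ζ_q^{k₁·i}` and `D(n) = ∑_{i<n} ζ_p^{t_p(i)} ζ_{qp^b}^{k₂·i}`,
one has `D(p^{d+b})·R(n) = D(p^{d+b}·n)` for all `n`; in particular `R ∼ D`. -/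
theorem stmt17 (p q : ℕ) (hp : 2 ≤ p) (hq : 2 ≤ q) (hpq : Nat.gcd p q = 1)
    (k₁ k₂ b d : ℕ) (hk₂ : Nat.gcd k₂ (q * p ^ b) = 1)
    (hcong : k₁ ≡ p ^ d * k₂ [MOD q])
    (t : ℕ → ZMod p) (ht0 : t 0 = 0)
    (htrec : ∀ m r : ℕ, r < p → t (p * m + r) = t m + (r : ZMod p))
    (R : ℕ → ℂ)
    (hR : ∀ n, R n = ∑ i ∈ range n,
      Complex.exp (2 * Real.pi * I / p) ^ (t i).val *
        Complex.exp (2 * Real.pi * I / q) ^ (k₁ * i))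
    (D : ℕ → ℂ)
    (hD : ∀ n, D n = ∑ i ∈ range n,
      Complex.exp (2 * Real.pi * I / p) ^ (t i).val *
        Complex.exp (2 * Real.pi * I / (q * p ^ b)) ^ (k₂ * i)) :
    (∀ n, D (p ^ (d + b)) * R n = D (p ^ (d + b) * n)) ∧ Sim R D := by
  haveI : NeZero p := ⟨by omega⟩
  have hpc : (p : ℂ) ≠ 0 := Nat.cast_ne_zero.mpr (by omega)
  have hqc : (q : ℂ) ≠ 0 := Nat.cast_ne_zero.mpr (by omega)
  have hqpb : q * p ^ b ≠ 0 := by positivity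
  set ζp := Complex.exp (2 * Real.pi * I / p) with hzp
  set ζq := Complex.exp (2 * Real.pi * I / q) with hzq
  set ζ := Complex.exp (2 * Real.pi * I / (q * p ^ b)) with hz
  have hprim : IsPrimitiveRoot ζ (q * p ^ b) := by
    rw [hz]
    have h := Complex.isPrimitiveRoot_exp (q * p ^ b) hqpb
    convert h using 3
    push_cast
    ring
  have h1 : ζp ^ p = 1 := by
    have e : (p : ℂ) * (2 * Real.pi * I / p) = 2 * Real.pi * I := by field_simp
    rw [hzp, ← Complex.exp_nat_mul, e, Complex.exp_two_pi_mul_I]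
  have h3 : ζq ^ q = 1 := by
    have e : (q : ℂ) * (2 * Real.pi * I / q) = 2 * Real.pi * I := by field_simp
    rw [hzq, ← Complex.exp_nat_mul, e, Complex.exp_two_pi_mul_I]
  have h4 : ζ ^ p ^ b = ζq := by
    have hpbc : ((p : ℂ)) ^ b ≠ 0 := pow_ne_zero _ hpc
    rw [hz, hzq, ← Complex.exp_nat_mul]
    congr 1
    push_cast
    field_simp
  have hval : ∀ x y : ZMod p, ζp ^ (x + y).val = ζp ^ x.val * ζp ^ y.val := by
    intro x y
    rw [← pow_add]
    exact pow_congr_mod h1 (by simp [Nat.ModEq, ZMod.val_add])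
  have hcarry := t_carry hp t ht0 htrec
  -- key single-term identity
  have key : ∀ n r, r < p ^ (d + b) →
      ζp ^ (t (p ^ (d + b) * n + r)).val * ζ ^ (k₂ * (p ^ (d + b) * n + r))
        = (ζp ^ (t n).val * ζq ^ (k₁ * n)) * (ζp ^ (t r).val * ζ ^ (k₂ * r)) := by
    intro n r hr
    rw [hcarry (d + b) n r hr, hval]
    have hexp : ζ ^ (k₂ * (p ^ (d + b) * n + r)) = ζq ^ (k₁ * n) * ζ ^ (k₂ * r) := by
      rw [Nat.mul_add, pow_add]
      congr 1
      have e1 : k₂ * (p ^ (d + b) * n) = p ^ b * (p ^ d * k₂ * n) := by ring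
      rw [e1, pow_mul, h4]
      exact pow_congr_mod h3 (Nat.ModEq.mul_right n hcong.symm)
    rw [hexp]
    ring
  have main : ∀ n, D (p ^ (d + b)) * R n = D (p ^ (d + b) * n) := by
    intro n
    rw [hR, hD, hD, sum_decomp]
    have step : ∀ m ∈ range n,
        (∑ r ∈ range (p ^ (d + b)),
          ζp ^ (t (p ^ (d + b) * m + r)).val * ζ ^ (k₂ * (p ^ (d + b) * m + r)))
        = (ζp ^ (t m).val * ζq ^ (k₁ * m)) *
            ∑ r ∈ range (p ^ (d + b)), ζp ^ (t r).val * ζ ^ (k₂ * r) := by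
      intro m _
      rw [Finset.mul_sum]
      exact Finset.sum_congr rfl fun r hr => key m r (mem_range.mp hr)
    rw [Finset.sum_congr rfl step, ← Finset.sum_mul]
    ring
  -- nonvanishing of D (p^(d+b))
  have hqk : Nat.Coprime q k₂ :=
    (Nat.Coprime.coprime_dvd_right (dvd_mul_right q (p ^ b)) hk₂).symm
  have hqp : Nat.Coprime q p := Nat.Coprime.symm hpq
  have hgeo : ∀ c : ℕ, (∑ s ∈ range p, (ζp * ζ ^ (k₂ * p ^ c)) ^ s) ≠ 0 := by
    intro c
    set ω := ζp * ζ ^ (k₂ * p ^ c) with hw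
    have hωp : ω ^ p ≠ 1 := by
      intro h
      have h' : (ζ ^ (k₂ * p ^ c)) ^ p = 1 := by
        rw [hw, mul_pow, h1, one_mul] at h
        exact h
      rw [← pow_mul] at h'
      have hdvd : q * p ^ b ∣ k₂ * p ^ c * p := (hprim.pow_eq_one_iff_dvd _).mp h'
      have hdvdq : q ∣ k₂ * p ^ c * p := dvd_trans (dvd_mul_right q (p ^ b)) hdvd
      have hcop : Nat.Coprime q (k₂ * p ^ c * p) :=
        (hqk.mul_right (hqp.pow_right c)).mul_right hqp
      have := Nat.gcd_eq_left hdvdq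
      rw [hcop] at this
      omega
    have hω1 : ω ≠ 1 := fun h => hωp (by rw [h, one_pow])
    rw [geom_sum_eq hω1]
    exact div_ne_zero (sub_ne_zero.mpr hωp) (sub_ne_zero.mpr hω1)
  have hF : ∀ j c, (∑ i ∈ range (p ^ j), ζp ^ (t i).val * (ζ ^ (k₂ * p ^ c)) ^ i) ≠ 0 := by
    intro j
    induction j with
    | zero => intro c; simp [ht0]
    | succ j ih =>
      intro c
      have hfac : (∑ i ∈ range (p ^ (j + 1)), ζp ^ (t i).val * (ζ ^ (k₂ * p ^ c)) ^ i)
          = (∑ s ∈ range p, (ζp * ζ ^ (k₂ * p ^ c)) ^ s) *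
              ∑ i ∈ range (p ^ j), ζp ^ (t i).val * (ζ ^ (k₂ * p ^ (c + 1))) ^ i := by
        rw [pow_succ', sum_decomp]
        have step : ∀ m ∈ range (p ^ j),
            (∑ s ∈ range p, ζp ^ (t (p * m + s)).val * (ζ ^ (k₂ * p ^ c)) ^ (p * m + s))
            = (∑ s ∈ range p, (ζp * ζ ^ (k₂ * p ^ c)) ^ s) *
                (ζp ^ (t m).val * (ζ ^ (k₂ * p ^ (c + 1))) ^ m) := by
          intro m _
          rw [Finset.sum_mul]
          refine Finset.sum_congr rfl fun s hs => ?_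
          have hs' := mem_range.mp hs
          rw [htrec m s hs', hval, ZMod.val_natCast_of_lt hs']
          have e2 : (ζ ^ (k₂ * p ^ c)) ^ (p * m + s)
              = ((ζ ^ (k₂ * p ^ (c + 1))) ^ m) * (ζ ^ (k₂ * p ^ c)) ^ s := by
            rw [pow_add, pow_mul]
            congr 2
            rw [← pow_mul]
            congr 1
            ring
          rw [e2, mul_pow]
          ring
        rw [Finset.sum_congr rfl step, ← Finset.mul_sum]
      rw [hfac]
      exact mul_ne_zero (hgeo c) (ih (c + 1))
  have hDP : D (p ^ (d + b)) ≠ 0 := by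
    rw [hD]
    have h := hF (d + b) 0
    have e : ∀ i : ℕ, (ζ ^ (k₂ * p ^ 0)) ^ i = ζ ^ (k₂ * i) := by
      intro i
      rw [pow_zero, mul_one, ← pow_mul]
    simp only [e] at h
    exact h
  refine ⟨main, 1, p ^ (d + b), one_pos, pow_pos (by omega) _, D (p ^ (d + b)), hDP, ?_⟩
  intro n
  rw [one_mul]
  exact main n
end
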